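/- Let L be a Lie algebra over ℚ and let P = { f : ℕ → L : f(0) = 0 }. Define [f, g]_b on P by [f, g]_b(2n) = Σ_{r=0}^{n} C(n, r) ⁅f(2r), g(2(n−r))⁆ and [f, g]_b(2n+1) = Σ_{r=0}^{n} C(n, r)( ⁅f(2r+1), g(2(n−r))⁆ + ⁅f(2r), g(2(n−r)+1)⁆ ), and define [f, g]_c(q) = Σ_{r+s=q, r and s not both odd} ⁅f(r), g(s)⁆. Then both [ , ]_b and [ , ]_c are Lie brackets on P, and the linear map Φ : P → P given by Φ(f)(2n) = (1/n!) f(2n) and Φ(f)(2n+1) = (1/n!) f(2n+1) is an isomorphism of Lie algebras from (P, [ , ]_b) to (P, [ , ]_c) preserving the filtration F_r = { f ∈ P : f(i) = 0 for all i < r }. -/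

import Mathlib

set_option autoImplicit false

/-- The space `P = { f : ℕ → L | f 0 = 0 }`. -/
noncomputable def Pseq (L : Type) [LieRing L] [LieAlgebra ℚ L] : Submodule ℚ (ℕ → L) :=
  LinearMap.ker (LinearMap.proj (R := ℚ) (φ := fun _ : ℕ => L) 0)

theorem mem_Pseq {L : Type} [LieRing L] [LieAlgebra ℚ L] {f : ℕ → L} :
    f ∈ Pseq L ↔ f 0 = 0 := by
  simp [Pseq]

/-- The "even/odd binomial" bracket:
`[f, g]_b(2n) = Σ_{r=0}^{n} C(n, r) ⁅f(2r), g(2(n−r))⁆` and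
`[f, g]_b(2n+1) = Σ_{r=0}^{n} C(n, r)(⁅f(2r+1), g(2(n−r))⁆ + ⁅f(2r), g(2(n−r)+1)⁆)`,
written with `n = q/2` and natural subtraction. -/
noncomputable def brBE {L : Type} [LieRing L] [LieAlgebra ℚ L] (f g : Pseq L) : Pseq L :=
  ⟨fun q =>
    if q % 2 = 0 then
      ∑ r ∈ Finset.range (q / 2 + 1),
        ((q / 2).choose r : ℚ) • ⁅(f : ℕ → L) (2 * r), (g : ℕ → L) (q - 2 * r)⁆
    else
      ∑ r ∈ Finset.range (q / 2 + 1),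
        ((q / 2).choose r : ℚ) •
          (⁅(f : ℕ → L) (2 * r + 1), (g : ℕ → L) (q - (2 * r + 1))⁆ +
            ⁅(f : ℕ → L) (2 * r), (g : ℕ → L) (q - 2 * r)⁆), by
    have hf : (f : ℕ → L) 0 = 0 := mem_Pseq.mp f.2
    simp [mem_Pseq, hf]⟩

/-- The bracket `[f, g]_c(q) = Σ_{r+s=q, r and s not both odd} ⁅f(r), g(s)⁆`. -/
noncomputable def brCE {L : Type} [LieRing L] [LieAlgebra ℚ L] (f g : Pseq L) : Pseq L :=
  ⟨fun q => ∑ r ∈ Finset.range (q + 1),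
      if Odd r ∧ Odd (q - r) then 0 else ⁅(f : ℕ → L) r, (g : ℕ → L) (q - r)⁆, by
    have hf : (f : ℕ → L) 0 = 0 := mem_Pseq.mp f.2
    simp [mem_Pseq, hf]⟩

/-- The rescaling map `Φ(f)(2n) = (1/n!) f(2n)`, `Φ(f)(2n+1) = (1/n!) f(2n+1)`,
i.e. `Φ(f)(q) = (1/(q/2)!) f(q)`. -/
noncomputable def PhiE {L : Type} [LieRing L] [LieAlgebra ℚ L] (f : Pseq L) : Pseq L :=
  ⟨fun q => (((q / 2).factorial : ℚ))⁻¹ • (f : ℕ → L) q, by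
    have hf : (f : ℕ → L) 0 = 0 := mem_Pseq.mp f.2
    simp [mem_Pseq, hf]⟩

/-- `B` is a Lie bracket making the `ℚ`-vector space `M` a Lie algebra over `ℚ`. -/
structure IsLieBracketQ (M : Type) [AddCommGroup M] [Module ℚ M] (B : M → M → M) : Prop where
  add_left : ∀ x y z, B (x + y) z = B x z + B y z
  smul_left : ∀ (c : ℚ) (x y), B (c • x) y = c • B x y
  add_right : ∀ x y z, B x (y + z) = B x y + B x z
  smul_right : ∀ (c : ℚ) (x y), B x (c • y) = c • B x y
  alternating : ∀ x, B x x = 0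
  leibniz : ∀ x y z, B x (B y z) = B (B x y) z + B y (B x z)

/-!
Both brackets are convolution brackets `[f, g](q) = ∑_{a + b = q} μ a b • ⁅f a, g b⁆`, i.e. the
brackets of `L ⊗ A` for a commutative associative algebra `A` with basis `(e n)` and
`e a * e b = μ a b • e (a + b)`. Symmetry and associativity of `μ` are all that is needed to make
such a bracket a Lie bracket. For `[ , ]_c` the algebra is `ℚ[x, y]/(y²)` with `e (2n) = xⁿ`,
`e (2n+1) = xⁿ y`; for `[ , ]_b` it is the same algebra in the divided-power basis
`xⁿ/n!, xⁿ y/n!`, so `Φ` is the change of basis. Hence `Φ` intertwines the brackets, and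
`[ , ]_b` is a Lie bracket because it is transported from `[ , ]_c` along the injective `Φ`.
-/

open Finset
open scoped Nat

namespace Finset.Nat

variable {M : Type*} [AddCommMonoid M]

theorem sum_antidiagonal_sum_antidiagonal_fst (q : ℕ) (F : ℕ × ℕ → ℕ × ℕ → M) :
    ∑ p ∈ antidiagonal q, ∑ r ∈ antidiagonal p.1, F p r =
      ∑ p ∈ antidiagonal q, ∑ r ∈ antidiagonal p.2, F (p.1 + r.1, r.2) (p.1, r.1) := by
  simp only [sum_sigma']
  apply sum_nbij' (fun x ↦ ⟨(x.2.1, x.2.2 + x.1.2), (x.2.2, x.1.2)⟩)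
    (fun x ↦ ⟨(x.1.1 + x.2.1, x.2.2), (x.1.1, x.2.1)⟩) <;>
    aesop (add simp [add_assoc])

theorem sum_antidiagonal_sum_antidiagonal_snd_comm (q : ℕ) (F : ℕ × ℕ → ℕ × ℕ → M) :
    ∑ p ∈ antidiagonal q, ∑ r ∈ antidiagonal p.2, F p r =
      ∑ p ∈ antidiagonal q, ∑ r ∈ antidiagonal p.2, F (r.1, p.1 + r.2) (p.1, r.2) := by
  simp only [sum_sigma']
  apply sum_nbij' (fun x ↦ ⟨(x.2.1, x.1.1 + x.2.2), (x.1.1, x.2.2)⟩)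
    (fun x ↦ ⟨(x.2.1, x.1.1 + x.2.2), (x.1.1, x.2.2)⟩) <;>
    aesop (add simp [add_assoc, add_left_comm])

theorem sum_antidiagonal_eq_sum_even_add_sum_odd (q : ℕ) (F : ℕ × ℕ → M) :
    ∑ p ∈ antidiagonal q, F p =
      ∑ r ∈ range (q / 2 + 1), F (2 * r, q - 2 * r) +
        ∑ r ∈ range ((q + 1) / 2), F (2 * r + 1, q - (2 * r + 1)) := by
  rw [← sum_filter_add_sum_filter_not _ (fun p ↦ Even p.1)]
  congr 1
  · refine sum_nbij' (fun p ↦ p.1 / 2) (fun r ↦ (2 * r, q - 2 * r)) ?_ ?_ ?_ ?_ ?_ <;>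
      simp only [mem_filter, HasAntidiagonal.mem_antidiagonal, mem_range, Prod.forall,
        Prod.mk.injEq, Nat.even_iff] <;> intros
    all_goals first | omega | (congr 1; simp only [Prod.mk.injEq]; omega)
  · refine sum_nbij' (fun p ↦ p.1 / 2) (fun r ↦ (2 * r + 1, q - (2 * r + 1))) ?_ ?_ ?_ ?_ ?_ <;>
      simp only [mem_filter, HasAntidiagonal.mem_antidiagonal, mem_range, Prod.forall,
        Prod.mk.injEq, Nat.not_even_iff_odd, Nat.odd_iff] <;> intros
    all_goals first | omega | (congr 1; simp only [Prod.mk.injEq]; omega)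

end Finset.Nat

theorem IsLieBracketQ.of_injective {M N : Type} [AddCommGroup M] [Module ℚ M] [AddCommGroup N]
    [Module ℚ N] {B : M → M → M} {B' : N → N → N} (hB' : IsLieBracketQ N B') (Φ : M →ₗ[ℚ] N)
    (hΦ : Function.Injective Φ) (h : ∀ x y, Φ (B x y) = B' (Φ x) (Φ y)) : IsLieBracketQ M B where
  add_left x y z := hΦ <| by simp only [h, map_add, hB'.add_left]
  smul_left c x y := hΦ <| by simp only [h, map_smul, hB'.smul_left]
  add_right x y z := hΦ <| by simp only [h, map_add, hB'.add_right]
  smul_right c x y := hΦ <| by simp only [h, map_smul, hB'.smul_right]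
  alternating x := hΦ <| by rw [h, hB'.alternating, map_zero]
  leibniz x y z := hΦ <| by
    simp only [h, map_add]
    exact hB'.leibniz _ _ _

section ConvBracket

variable {R L : Type*} [CommRing R] [LieRing L] [LieAlgebra R L]

def convBracket (μ : ℕ → ℕ → R) (f g : ℕ → L) (q : ℕ) : L :=
  ∑ p ∈ antidiagonal q, μ p.1 p.2 • ⁅f p.1, g p.2⁆

variable (μ : ℕ → ℕ → R)

theorem convBracket_add_left (f f' g : ℕ → L) :
    convBracket μ (f + f') g = convBracket μ f g + convBracket μ f' g := by
  ext q
  simp only [convBracket, Pi.add_apply, add_lie, smul_add, sum_add_distrib]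

theorem convBracket_add_right (f g g' : ℕ → L) :
    convBracket μ f (g + g') = convBracket μ f g + convBracket μ f g' := by
  ext q
  simp only [convBracket, Pi.add_apply, lie_add, smul_add, sum_add_distrib]

theorem convBracket_smul_left (c : R) (f g : ℕ → L) :
    convBracket μ (c • f) g = c • convBracket μ f g := by
  ext q
  simp only [convBracket, Pi.smul_apply, smul_lie, smul_sum, smul_comm c]

theorem convBracket_smul_right (c : R) (f g : ℕ → L) :
    convBracket μ f (c • g) = c • convBracket μ f g := by
  ext q
  simp only [convBracket, Pi.smul_apply, lie_smul, smul_sum, smul_comm c]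

theorem convBracket_self (hμ : ∀ a b, μ a b = μ b a) (f : ℕ → L) : convBracket μ f f = 0 := by
  ext q
  refine sum_involution (fun p _ ↦ p.swap) (fun p _ ↦ ?_) (fun p _ hp hswap ↦ hp ?_)
    (fun p hp ↦ mem_antidiagonal.2 ((add_comm _ _).trans (mem_antidiagonal.1 hp)))
    (fun p _ ↦ p.swap_swap)
  · rw [Prod.fst_swap, Prod.snd_swap, hμ, ← smul_add, ← lie_skew, neg_add_cancel, smul_zero]
  · rw [← Prod.fst_swap, hswap, lie_self, smul_zero]

theorem convBracket_leibniz (hμ : ∀ a b, μ a b = μ b a)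
    (hμ' : ∀ a b c, μ a b * μ (a + b) c = μ a (b + c) * μ b c) (f g h : ℕ → L) :
    convBracket μ f (convBracket μ g h) =
      convBracket μ (convBracket μ f g) h + convBracket μ g (convBracket μ f h) := by
  ext q
  simp only [convBracket, Pi.add_apply, lie_sum, sum_lie, smul_sum, lie_smul, smul_lie, smul_smul]
  rw [Nat.sum_antidiagonal_sum_antidiagonal_fst]
  conv_rhs => arg 2; rw [Nat.sum_antidiagonal_sum_antidiagonal_snd_comm]
  rw [← sum_add_distrib]
  refine sum_congr rfl fun p _ ↦ ?_
  rw [← sum_add_distrib]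
  refine sum_congr rfl fun r hr ↦ ?_
  obtain ⟨a, _⟩ := p
  obtain ⟨b, c⟩ := r
  obtain rfl : b + c = _ := mem_antidiagonal.1 hr
  have hfg : μ (a + b) c * μ a b = μ a (b + c) * μ b c := by rw [mul_comm, hμ']
  have hgf : μ b (a + c) * μ a c = μ a (b + c) * μ b c := by
    rw [← hμ', hμ b, add_comm b, mul_comm, hfg]
  rw [hfg, hgf, ← smul_add, ← leibniz_lie]

end ConvBracket

theorem isLieBracketQ_convBracket {L : Type} [LieRing L] [LieAlgebra ℚ L] {μ : ℕ → ℕ → ℚ}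
    (hμ : ∀ a b, μ a b = μ b a) (hμ' : ∀ a b c, μ a b * μ (a + b) c = μ a (b + c) * μ b c) :
    IsLieBracketQ (ℕ → L) (convBracket μ) :=
  ⟨convBracket_add_left μ, convBracket_smul_left μ, convBracket_add_right μ,
    convBracket_smul_right μ, convBracket_self μ hμ, convBracket_leibniz μ hμ hμ'⟩

theorem convBracket_rescale {R L : Type*} [CommRing R] [LieRing L] [LieAlgebra R L]
    {μ ν : ℕ → ℕ → R} (w : ℕ → R) (h : ∀ a b, w (a + b) * μ a b = ν a b * w a * w b)
    (f g : ℕ → L) : w • convBracket μ f g = convBracket ν (w • f) (w • g) := by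
  ext q
  rw [Pi.smul_apply', convBracket, convBracket, smul_sum]
  refine sum_congr rfl fun p hp ↦ ?_
  rw [Pi.smul_apply', Pi.smul_apply', smul_lie, lie_smul, smul_smul, smul_smul, smul_smul,
    ← mem_antidiagonal.1 hp, h]

def notBothOdd (a b : ℕ) : ℚ := if Odd a ∧ Odd b then 0 else 1

def evenOddBinom (a b : ℕ) : ℚ := if Odd a ∧ Odd b then 0 else (a / 2 + b / 2).choose (a / 2)

theorem evenOddBinom_two_mul {r q : ℕ} (h : 2 * r ≤ q) :
    evenOddBinom (2 * r) (q - 2 * r) = (q / 2).choose r := by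
  rw [evenOddBinom, if_neg fun h' ↦ Nat.not_odd_iff_even.2 (even_two_mul r) h'.1]
  congr 3 <;> omega

theorem evenOddBinom_two_mul_add_one {r q : ℕ} (h : 2 * r + 1 ≤ q) :
    evenOddBinom (2 * r + 1) (q - (2 * r + 1)) = if Odd q then ((q / 2).choose r : ℚ) else 0 := by
  simp only [evenOddBinom, Nat.odd_iff]
  split_ifs <;> first | rfl | omega | (congr 3 <;> omega)

theorem notBothOdd_comm (a b : ℕ) : notBothOdd a b = notBothOdd b a := by
  simp only [notBothOdd, and_comm]

-- Both sides vanish exactly when at least two of `a`, `b`, `c` are odd.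
theorem notBothOdd_mul_notBothOdd (a b c : ℕ) :
    notBothOdd a b * notBothOdd (a + b) c = notBothOdd a (b + c) * notBothOdd b c := by
  simp only [notBothOdd, Nat.odd_iff]
  split_ifs <;> norm_num <;> omega

theorem inv_factorial_half_mul_evenOddBinom (a b : ℕ) :
    (((a + b) / 2)! : ℚ)⁻¹ * evenOddBinom a b =
      notBothOdd a b * ((a / 2)! : ℚ)⁻¹ * ((b / 2)! : ℚ)⁻¹ := by
  unfold evenOddBinom notBothOdd
  split_ifs with h
  · simp
  · rw [Nat.odd_iff, Nat.odd_iff] at h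
    rw [show (a + b) / 2 = a / 2 + b / 2 by omega, Nat.cast_add_choose]
    field_simp

section Pseq

variable {L : Type} [LieRing L] [LieAlgebra ℚ L]

theorem coe_brCE (f g : Pseq L) : (brCE f g : ℕ → L) = convBracket notBothOdd f g := by
  ext q
  dsimp only [brCE]
  rw [convBracket, Finset.Nat.sum_antidiagonal_eq_sum_range_succ_mk]
  refine sum_congr rfl fun r _ ↦ ?_
  rw [notBothOdd, ite_smul, zero_smul, one_smul]

theorem coe_brBE (f g : Pseq L) : (brBE f g : ℕ → L) = convBracket evenOddBinom f g := by
  ext q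
  rw [convBracket, Nat.sum_antidiagonal_eq_sum_even_add_sum_odd]
  dsimp only [brBE]
  split_ifs with hq
  · rw [sum_eq_zero (s := range ((q + 1) / 2)) fun r hr ↦ ?_, add_zero]
    · refine sum_congr rfl fun r hr ↦ ?_
      rw [mem_range] at hr
      rw [evenOddBinom_two_mul (by omega)]
    · rw [mem_range] at hr
      rw [evenOddBinom_two_mul_add_one (by omega), if_neg (by rw [Nat.odd_iff]; omega),
        zero_smul]
  · rw [show (q + 1) / 2 = q / 2 + 1 by omega, ← sum_add_distrib]
    refine sum_congr rfl fun r hr ↦ ?_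
    rw [mem_range] at hr
    rw [evenOddBinom_two_mul (by omega), evenOddBinom_two_mul_add_one (by omega),
      if_pos (Nat.odd_iff.2 (by omega)), smul_add, add_comm]

theorem coe_phiE (f : Pseq L) : (PhiE f : ℕ → L) = (fun q ↦ ((q / 2)! : ℚ)⁻¹) • (f : ℕ → L) := rfl

theorem phiE_brBE (f g : Pseq L) : PhiE (brBE f g) = brCE (PhiE f) (PhiE g) :=
  Subtype.ext <| by
    rw [coe_phiE, coe_brBE, convBracket_rescale _ inv_factorial_half_mul_evenOddBinom, coe_brCE,
      coe_phiE, coe_phiE]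

noncomputable def PhiE.linearMap : Pseq L →ₗ[ℚ] Pseq L where
  toFun := PhiE
  map_add' _ _ := Subtype.ext <| funext fun _ ↦ smul_add _ _ _
  map_smul' c _ := Subtype.ext <| funext fun _ ↦ smul_comm _ c _

theorem phiE_bijective : Function.Bijective (PhiE (L := L)) := by
  refine Function.bijective_iff_has_inverse.2
    ⟨fun f ↦ ⟨fun q ↦ ((q / 2)! : ℚ) • (f : ℕ → L) q, mem_Pseq.2 (by simp [mem_Pseq.1 f.2])⟩,
      fun f ↦ ?_, fun f ↦ ?_⟩ <;>
    ext q <;> simp [PhiE, smul_smul, Nat.factorial_ne_zero]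

theorem isLieBracketQ_brCE : IsLieBracketQ (Pseq L) brCE :=
  (isLieBracketQ_convBracket notBothOdd_comm notBothOdd_mul_notBothOdd).of_injective
    (Pseq L).subtype Subtype.val_injective coe_brCE

end Pseq

/-- On `P = { f : ℕ → L | f(0) = 0 }`, both the even/odd binomial
bracket `[ , ]_b` and the bracket `[f, g]_c(q) = Σ_{r+s=q, r,s not both odd} ⁅f(r), g(s)⁆`
are Lie brackets, and `Φ(f)(2n) = (1/n!) f(2n)`, `Φ(f)(2n+1) = (1/n!) f(2n+1)` is an
isomorphism of Lie algebras from `(P, [ , ]_b)` to `(P, [ , ]_c)` preserving the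
filtration `F_r = { f | f(i) = 0 for i < r }`. -/
theorem stmt_10 (L : Type) [LieRing L] [LieAlgebra ℚ L] :
    -- both brackets are Lie brackets:
    IsLieBracketQ (Pseq L) brBE ∧
    IsLieBracketQ (Pseq L) brCE ∧
    -- `Φ` is linear:
    (∀ f g : Pseq L, PhiE (f + g) = PhiE f + PhiE g) ∧
    (∀ (c : ℚ) (f : Pseq L), PhiE (c • f) = c • PhiE f) ∧
    -- `Φ` is bijective:
    Function.Bijective (PhiE (L := L)) ∧
    -- `Φ` takes `[ , ]_b` to `[ , ]_c`:
    (∀ f g : Pseq L, PhiE (brBE f g) = brCE (PhiE f) (PhiE g)) ∧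
    -- `Φ` preserves the filtration `F_r`:
    (∀ (r : ℕ) (f : Pseq L), (∀ i < r, (f : ℕ → L) i = 0) →
      ∀ i < r, ((PhiE f : Pseq L) : ℕ → L) i = 0) := by
  refine ⟨isLieBracketQ_brCE.of_injective PhiE.linearMap phiE_bijective.1 phiE_brBE,
    isLieBracketQ_brCE, PhiE.linearMap.map_add, PhiE.linearMap.map_smul, phiE_bijective,
    phiE_brBE, ?_⟩
  intro r f hf i hi
  rw [coe_phiE, Pi.smul_apply', hf i hi, smul_zero]
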